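/- Let m ≥ 5 be an integer, let u : ℝ^m ∖ {0} → ℝ^{m²} be the Misawa–Nakauchi map, let α ∈ (0, π/2) satisfy sin²α = 1 − 2/m, and define ũ(x) = (sin α · u(x), cos α). Then the bienergy of ũ over the unit ball satisfies E₂(ũ) = (1/2)∫_{B^m} (|Δũ|² − |∇ũ|⁴) dx = (4(m−2)/(m−4)) · vol(𝕊^{m−1}). -/

import Mathlib

noncomputable section

open Real MeasureTheory

/-- Partial derivative of `f` in the `k`-th coordinate direction. -/
def pd {m : ℕ} (k : Fin m) (f : EuclideanSpace ℝ (Fin m) → ℝ)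
    (x : EuclideanSpace ℝ (Fin m)) : ℝ :=
  fderiv ℝ f x (EuclideanSpace.single k 1)

/-- Euclidean Laplacian `Δf = Σ_k ∂²f/∂x_k²`. -/
def lap {m : ℕ} (f : EuclideanSpace ℝ (Fin m) → ℝ)
    (x : EuclideanSpace ℝ (Fin m)) : ℝ :=
  ∑ k : Fin m, pd k (pd k f) x

/-- Squared norm of the total derivative: `|∇w|² = Σ_{k,a} (∂_k w_a)²`. -/
def gradSq {m : ℕ} {ι : Type*} [Fintype ι]
    (w : ι → EuclideanSpace ℝ (Fin m) → ℝ) (x : EuclideanSpace ℝ (Fin m)) : ℝ :=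
  ∑ k : Fin m, ∑ a : ι, (pd k (w a) x) ^ 2

/-- The Misawa–Nakauchi map `u_{ij}(x) = (1/√(m(m−1)))(−δ_{ij} + m xᵢxⱼ/r²)`. -/
def uMN (m : ℕ) (i j : Fin m) (x : EuclideanSpace ℝ (Fin m)) : ℝ :=
  (1 / Real.sqrt ((m : ℝ) * ((m : ℝ) - 1))) *
    (-(if i = j then (1 : ℝ) else 0) + (m : ℝ) * x i * x j / ‖x‖ ^ 2)

/-- The rotated map `ũ_α = (sin α · u, cos α)`, with values in `ℝ^{m²+1} = ℝ^{m²} × ℝ`. -/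
def uTilde (m : ℕ) (α : ℝ) :
    (Fin m × Fin m) ⊕ Unit → EuclideanSpace ℝ (Fin m) → ℝ
  | Sum.inl p => fun x => Real.sin α * uMN m p.1 p.2 x
  | Sum.inr _ => fun _ => Real.cos α

/-- The open unit ball in `ℝ^m`. -/
def unitBall (m : ℕ) : Set (EuclideanSpace ℝ (Fin m)) := Metric.ball 0 1

/-- The surface measure of the unit sphere `𝕊^{m−1} ⊂ ℝ^m`. -/
def sphereVol (m : ℕ) : ℝ :=
  ((volume : Measure (EuclideanSpace ℝ (Fin m))).toSphere Set.univ).toReal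

/-!
Write `P_{ij}(x) = xᵢxⱼ/|x|²` for the orthogonal projection onto `ℝx`, so that
`u = (mP − I)/√(m(m−1))`. The product rule gives
`∂ₖP_{ij} = (δ_{ki}xⱼ + xᵢδ_{kj})|x|⁻² − 2xᵢxⱼxₖ|x|⁻⁴`, and its second-order form
`Δ(fg) = gΔf + 2∇f·∇g + fΔg`, together with `Δ|x|⁻² = (8 − 2m)|x|⁻⁴`, gives
`ΔP_{ij} = 2δ_{ij}|x|⁻² − 2m xᵢxⱼ|x|⁻⁴`; summing over the indices, `|∇u|² = 2m/|x|²` and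
`|Δu|² = 4m²/|x|⁴`. Hence the bienergy density of `ũ` is
`4m² sin²α cos²α/|x|⁴ = 8(m − 2)/|x|⁴`, and in polar coordinates
`∫_B |x|⁻⁴ = vol(𝕊^{m−1})/(m − 4)` for `m > 4`.
-/

open Filter Topology

section PartialDerivatives

variable {m : ℕ} {f g : EuclideanSpace ℝ (Fin m) → ℝ} {x : EuclideanSpace ℝ (Fin m)} (k : Fin m)

lemma pd_congr (h : f =ᶠ[𝓝 x] g) : pd k f x = pd k g x := by
  rw [pd, pd, h.fderiv_eq]

lemma pd_const (c : ℝ) : pd k (fun _ : EuclideanSpace ℝ (Fin m) => c) = fun _ => 0 := by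
  funext y
  simp [pd]

lemma pd_const_mul (c : ℝ) : pd k (fun y => c * f y) = fun y => c * pd k f y := by
  funext y
  rw [pd, show (fun y => c * f y) = c • f from rfl, fderiv_const_smul_field]
  rfl

lemma pd_const_add (c : ℝ) : pd k (fun y => c + f y) = pd k f := by
  funext y
  rw [pd, fderiv_const_add, pd]

lemma pd_add (hf : DifferentiableAt ℝ f x) (hg : DifferentiableAt ℝ g x) :
    pd k (fun y => f y + g y) x = pd k f x + pd k g x := by
  simp [pd, fderiv_fun_add hf hg]

lemma pd_mul (hf : DifferentiableAt ℝ f x) (hg : DifferentiableAt ℝ g x) :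
    pd k (fun y => f y * g y) x = pd k f x * g x + f x * pd k g x := by
  simp only [pd, fderiv_fun_mul hf hg, add_apply, smul_apply, smul_eq_mul]
  ring

lemma pd_inv (hf : DifferentiableAt ℝ f x) (hx : f x ≠ 0) :
    pd k (fun y => (f y)⁻¹) x = -pd k f x / f x ^ 2 := by
  have h := (hasDerivAt_inv hx).comp_hasFDerivAt x hf.hasFDerivAt
  rw [pd, show (fun y => (f y)⁻¹) = (fun t => t⁻¹) ∘ f from rfl, h.fderiv]
  simp [pd, div_eq_inv_mul]

lemma pd_coord (i : Fin m) : pd k (fun y => y i) x = if k = i then 1 else 0 := by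
  have h : HasFDerivAt (fun y : EuclideanSpace ℝ (Fin m) => y i)
      (EuclideanSpace.proj i : EuclideanSpace ℝ (Fin m) →L[ℝ] ℝ) x :=
    (EuclideanSpace.proj i : EuclideanSpace ℝ (Fin m) →L[ℝ] ℝ).hasFDerivAt
  rw [pd, h.fderiv]
  simp [eq_comm]

lemma pd_norm_sq : pd k (fun y => ‖y‖ ^ 2) x = 2 * x k := by
  simp [pd, EuclideanSpace.inner_single_right]

lemma ContDiffAt.differentiableAt_pd (hf : ContDiffAt ℝ 2 f x) :
    DifferentiableAt ℝ (pd k f) x :=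
  ((hf.fderiv_right (m := 1) le_rfl).clm_apply contDiffAt_const).differentiableAt one_ne_zero

lemma pd_pd_mul (hf : ContDiffAt ℝ 2 f x) (hg : ContDiffAt ℝ 2 g x) :
    pd k (pd k fun y => f y * g y) x
      = pd k (pd k f) x * g x + 2 * (pd k f x * pd k g x) + f x * pd k (pd k g) x := by
  have hdiff : ∀ h : EuclideanSpace ℝ (Fin m) → ℝ, ContDiffAt ℝ 2 h x →
      ∀ᶠ y in 𝓝 x, DifferentiableAt ℝ h y := fun h hh =>
    (hh.eventually (by simp)).mono fun y hy => hy.differentiableAt two_ne_zero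
  have hfirst : pd k (fun y => f y * g y) =ᶠ[𝓝 x] fun y => pd k f y * g y + f y * pd k g y := by
    filter_upwards [hdiff f hf, hdiff g hg] with y hfy hgy
    exact pd_mul k hfy hgy
  have hf1 := hf.differentiableAt two_ne_zero
  have hg1 := hg.differentiableAt two_ne_zero
  have hf2 := hf.differentiableAt_pd k
  have hg2 := hg.differentiableAt_pd k
  rw [pd_congr k hfirst, pd_add k (hf2.fun_mul hg1) (hf1.fun_mul hg2), pd_mul k hf2 hg1,
    pd_mul k hf1 hg2]
  ring

lemma lap_congr (h : f =ᶠ[𝓝 x] g) : lap f x = lap g x := by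
  refine Finset.sum_congr rfl fun k _ => pd_congr k ?_
  exact h.eventuallyEq_nhds.mono fun y hy => pd_congr k hy

lemma lap_const (c : ℝ) : lap (fun _ : EuclideanSpace ℝ (Fin m) => c) x = 0 := by
  simp [lap, pd_const]

lemma lap_mul (hf : ContDiffAt ℝ 2 f x) (hg : ContDiffAt ℝ 2 g x) :
    lap (fun y => f y * g y) x
      = lap f x * g x + 2 * ∑ k, pd k f x * pd k g x + f x * lap g x := by
  simp only [lap, pd_pd_mul _ hf hg, Finset.sum_add_distrib, Finset.sum_mul, Finset.mul_sum]

lemma lap_const_mul (c : ℝ) : lap (fun y => c * f y) x = c * lap f x := by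
  simp only [lap, pd_const_mul, Finset.mul_sum]

end PartialDerivatives

section RadialCalculus

variable {m : ℕ} {x : EuclideanSpace ℝ (Fin m)}

lemma contDiffAt_coord (i : Fin m) : ContDiffAt ℝ 2 (fun y : EuclideanSpace ℝ (Fin m) => y i) x :=
  (EuclideanSpace.proj i : EuclideanSpace ℝ (Fin m) →L[ℝ] ℝ).contDiff.contDiffAt

lemma contDiffAt_inv_norm_sq (hx : x ≠ 0) :
    ContDiffAt ℝ 2 (fun y : EuclideanSpace ℝ (Fin m) => (‖y‖ ^ 2)⁻¹) x :=
  (contDiff_norm_sq ℝ).contDiffAt.inv (by positivity)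

lemma lap_coord (i : Fin m) : lap (fun y : EuclideanSpace ℝ (Fin m) => y i) x = 0 := by
  have : ∀ k, pd k (fun y : EuclideanSpace ℝ (Fin m) => y i) = fun _ => if k = i then 1 else 0 :=
    fun k => funext fun y => pd_coord k i
  simp [lap, this, pd_const]

lemma lap_coord_mul_coord (i j : Fin m) :
    lap (fun y : EuclideanSpace ℝ (Fin m) => y i * y j) x = 2 * if i = j then 1 else 0 := by
  rw [lap_mul (contDiffAt_coord i) (contDiffAt_coord j)]
  simp [lap_coord, pd_coord, eq_comm]

lemma lap_norm_sq : lap (fun y : EuclideanSpace ℝ (Fin m) => ‖y‖ ^ 2) x = 2 * m := by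
  have : ∀ k, pd k (fun y : EuclideanSpace ℝ (Fin m) => ‖y‖ ^ 2) = fun y => 2 * y k :=
    fun k => funext fun y => pd_norm_sq k
  simp only [lap, this, pd_const_mul, pd_coord, ↓reduceIte, mul_one, Finset.sum_const,
    Finset.card_univ, Fintype.card_fin, nsmul_eq_mul]
  ring

lemma pd_inv_norm_sq (hx : x ≠ 0) (k : Fin m) :
    pd k (fun y : EuclideanSpace ℝ (Fin m) => (‖y‖ ^ 2)⁻¹) x = -2 * x k * ((‖x‖ ^ 2)⁻¹) ^ 2 := by
  rw [pd_inv k ((contDiff_norm_sq ℝ).differentiable one_ne_zero x) (by positivity), pd_norm_sq]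
  field_simp

lemma lap_inv_norm_sq (hx : x ≠ 0) :
    lap (fun y : EuclideanSpace ℝ (Fin m) => (‖y‖ ^ 2)⁻¹) x = (8 - 2 * m) * ((‖x‖ ^ 2)⁻¹) ^ 2 := by
  have hx2 : ‖x‖ ^ 2 ≠ 0 := by positivity
  -- take the Laplacian of `‖y‖² · ‖y‖⁻² = 1` and solve for `Δ‖y‖⁻²`
  have hone : (fun y : EuclideanSpace ℝ (Fin m) => ‖y‖ ^ 2 * (‖y‖ ^ 2)⁻¹) =ᶠ[𝓝 x] fun _ => 1 :=
    (eventually_ne_nhds hx).mono fun y hy => by simp [hy]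
  have h := lap_mul (contDiff_norm_sq ℝ (n := 2)).contDiffAt (contDiffAt_inv_norm_sq hx)
  simp only [lap_congr hone, lap_const, lap_norm_sq, pd_norm_sq, pd_inv_norm_sq hx] at h
  have hsum : ∑ k : Fin m, 2 * x k * (-2 * x k * ((‖x‖ ^ 2)⁻¹) ^ 2) = -4 * (‖x‖ ^ 2)⁻¹ := by
    simp_rw [show ∀ k, 2 * x k * (-2 * x k * ((‖x‖ ^ 2)⁻¹) ^ 2) = -4 * ((‖x‖ ^ 2)⁻¹) ^ 2 * x k ^ 2
      from fun k => by ring, ← Finset.mul_sum, ← EuclideanSpace.real_norm_sq_eq]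
    field_simp
  rw [hsum] at h
  field_simp at h ⊢
  linear_combination -h

lemma pd_coord_mul_coord (i j k : Fin m) :
    pd k (fun y : EuclideanSpace ℝ (Fin m) => y i * y j) x
      = (if k = i then 1 else 0) * x j + x i * (if k = j then 1 else 0) := by
  rw [pd_mul k ((contDiffAt_coord i).differentiableAt two_ne_zero)
    ((contDiffAt_coord j).differentiableAt two_ne_zero), pd_coord, pd_coord]

def lineProj (i j : Fin m) (y : EuclideanSpace ℝ (Fin m)) : ℝ := y i * y j * (‖y‖ ^ 2)⁻¹

lemma pd_lineProj (hx : x ≠ 0) (i j k : Fin m) :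
    pd k (lineProj i j) x
      = ((if k = i then 1 else 0) * x j + x i * (if k = j then 1 else 0)) * (‖x‖ ^ 2)⁻¹
        - 2 * (x i * x j * x k) * ((‖x‖ ^ 2)⁻¹) ^ 2 := by
  unfold lineProj
  rw [pd_mul k (((contDiffAt_coord i).mul (contDiffAt_coord j)).differentiableAt two_ne_zero)
    ((contDiffAt_inv_norm_sq hx).differentiableAt two_ne_zero), pd_coord_mul_coord,
    pd_inv_norm_sq hx]
  ring

lemma lap_lineProj (hx : x ≠ 0) (i j : Fin m) :
    lap (lineProj i j) x
      = 2 * (if i = j then 1 else 0) * (‖x‖ ^ 2)⁻¹ - 2 * m * (x i * x j) * ((‖x‖ ^ 2)⁻¹) ^ 2 := by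
  unfold lineProj
  rw [lap_mul ((contDiffAt_coord i).mul (contDiffAt_coord j)) (contDiffAt_inv_norm_sq hx),
    lap_coord_mul_coord, lap_inv_norm_sq hx]
  simp only [pd_coord_mul_coord, pd_inv_norm_sq hx]
  simp only [mul_ite, mul_one, mul_zero, ite_mul, zero_mul, one_mul, neg_mul, inv_pow, mul_neg,
    add_mul, neg_add_rev, Finset.sum_add_distrib, Finset.sum_neg_distrib, Finset.sum_ite_eq',
    Finset.mem_univ, ↓reduceIte]
  ring

end RadialCalculus

section Sums

variable {ι : Type*} [Fintype ι] [DecidableEq ι]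

lemma sum_sq_delta_add_outer (a b : ℝ) (v : ι → ℝ) :
    ∑ i, ∑ j, (a * (if i = j then 1 else 0) + b * (v i * v j)) ^ 2
      = a ^ 2 * Fintype.card ι + 2 * a * b * ∑ i, v i ^ 2 + b ^ 2 * (∑ i, v i ^ 2) ^ 2 := by
  simp only [add_sq, Finset.sum_add_distrib, mul_pow, ite_pow, mul_ite, ite_mul]
  simp only [sq, mul_one, mul_zero, Finset.sum_ite_eq, Finset.mem_univ, ↓reduceIte,
    Finset.sum_const, Finset.card_univ, nsmul_eq_mul, zero_mul, ← Finset.mul_sum, ← Finset.sum_mul]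
  ring

lemma sum_sq_delta_sym_add_cubic (a b : ℝ) (v : ι → ℝ) :
    ∑ k, ∑ i, ∑ j,
        (a * ((if k = i then 1 else 0) * v j + v i * (if k = j then 1 else 0))
          + b * (v i * v j * v k)) ^ 2
      = 2 * (Fintype.card ι + 1) * a ^ 2 * ∑ i, v i ^ 2 + 4 * a * b * (∑ i, v i ^ 2) ^ 2
        + b ^ 2 * (∑ i, v i ^ 2) ^ 3 := by
  simp only [add_sq, Finset.sum_add_distrib, mul_pow, ite_pow, mul_ite, ite_mul, mul_add, add_mul]
  simp only [one_pow, one_mul, ne_eq, OfNat.ofNat_ne_zero, not_false_eq_true, zero_pow, zero_mul,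
    mul_zero, Finset.sum_ite_irrel, ← Finset.mul_sum, Finset.sum_const_zero, Finset.sum_ite_eq,
    Finset.mem_univ, ↓reduceIte, Finset.sum_const, Finset.card_univ, nsmul_eq_mul, mul_one,
    ite_self, ← Finset.sum_mul]
  ring_nf
  simp only [← Finset.mul_sum, ← Finset.sum_mul]
  ring

end Sums

section Integration

open Metric Module

variable {E : Type*} [NormedAddCommGroup E] [NormedSpace ℝ E] [FiniteDimensional ℝ E]
  [MeasurableSpace E] [BorelSpace E]

lemma integral_Ioo_zero_one_pow (n : ℕ) : ∫ y in Set.Ioo (0 : ℝ) 1, y ^ n = 1 / (n + 1) := by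
  rw [← integral_Ioc_eq_integral_Ioo, ← intervalIntegral.integral_of_le zero_le_one,
    integral_pow]
  simp

lemma integral_unitBall_inv_norm_pow (μ : Measure E) [μ.IsAddHaarMeasure] {p : ℕ}
    (hp : p < finrank ℝ E) :
    ∫ x in ball (0 : E) 1, (‖x‖ ^ p)⁻¹ ∂μ = μ.toSphere.real Set.univ / (finrank ℝ E - p) := by
  have : Nontrivial E := Module.nontrivial_of_finrank_pos (R := ℝ) (by omega)
  have hball : (ball (0 : E) 1).indicator (fun x => (‖x‖ ^ p)⁻¹)
      = fun x => (Set.Iio 1).indicator (fun r : ℝ => (r ^ p)⁻¹) ‖x‖ := by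
    ext x
    by_cases hx : ‖x‖ < 1 <;> simp [hx]
  have hradial : ∫ y in Set.Ioi (0 : ℝ),
        y ^ (finrank ℝ E - 1) • (Set.Iio 1).indicator (fun r : ℝ => (r ^ p)⁻¹) y
      = ∫ y in Set.Ioo (0 : ℝ) 1, y ^ (finrank ℝ E - 1 - p) := by
    rw [← Set.Ioi_inter_Iio, ← setIntegral_indicator measurableSet_Iio]
    refine setIntegral_congr_fun measurableSet_Ioi fun y (hy : 0 < y) => ?_
    by_cases h1 : y < 1
    · simp [h1, pow_sub₀ _ hy.ne' (by omega : p ≤ finrank ℝ E - 1)]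
    · simp [h1]
  rw [← integral_indicator measurableSet_ball, hball, integral_fun_norm_addHaar, hradial,
    integral_Ioo_zero_one_pow, μ.toSphere_real_apply_univ]
  push_cast [Nat.cast_sub (by omega : p ≤ finrank ℝ E - 1),
    Nat.cast_sub (by omega : 1 ≤ finrank ℝ E)]
  simp only [nsmul_eq_mul, smul_eq_mul]
  ring

end Integration

section MisawaNakauchi

variable {m : ℕ} {x : EuclideanSpace ℝ (Fin m)}

lemma uMN_eq_lineProj (i j : Fin m) :
    uMN m i j = fun y => 1 / √(m * (m - 1)) * (-(if i = j then 1 else 0) + m * lineProj i j y) := by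
  funext y
  simp only [uMN, lineProj]
  ring

lemma pd_uMN (i j k : Fin m) :
    pd k (uMN m i j) = fun y => 1 / √(m * (m - 1)) * (m * pd k (lineProj i j) y) := by
  rw [uMN_eq_lineProj, pd_const_mul, pd_const_add, pd_const_mul]

lemma lap_uMN (i j : Fin m) :
    lap (uMN m i j) x = 1 / √(m * (m - 1)) * (m * lap (lineProj i j) x) := by
  simp only [lap, pd_uMN, pd_const_mul, Finset.mul_sum]

lemma uMN_scale_sq (hm : 2 ≤ m) : (1 / √(m * (m - 1)) * m) ^ 2 = m / (m - 1) := by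
  have hm' : (2 : ℝ) ≤ m := by exact_mod_cast hm
  rw [mul_pow, div_pow, Real.sq_sqrt (by nlinarith)]
  field_simp

lemma sum_sq_pd_uMN (hm : 2 ≤ m) (hx : x ≠ 0) :
    ∑ k, ∑ i, ∑ j, (pd k (uMN m i j) x) ^ 2 = 2 * m * (‖x‖ ^ 2)⁻¹ := by
  have hpd : ∀ k i j, pd k (uMN m i j) x = 1 / √(m * (m - 1)) * m *
      ((‖x‖ ^ 2)⁻¹ * ((if k = i then 1 else 0) * x j + x i * (if k = j then 1 else 0))
        + -2 * ((‖x‖ ^ 2)⁻¹) ^ 2 * (x i * x j * x k)) := by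
    intro k i j
    simp only [pd_uMN, pd_lineProj hx]
    ring
  simp_rw [hpd, mul_pow _ (_ + _), ← Finset.mul_sum, sum_sq_delta_sym_add_cubic,
    ← EuclideanSpace.real_norm_sq_eq, uMN_scale_sq hm, Fintype.card_fin]
  have hm' : (2 : ℝ) ≤ m := by exact_mod_cast hm
  have : (m : ℝ) - 1 ≠ 0 := by linarith
  field_simp
  ring

lemma sum_sq_lap_uMN (hm : 2 ≤ m) (hx : x ≠ 0) :
    ∑ i, ∑ j, (lap (uMN m i j) x) ^ 2 = 4 * m ^ 2 * ((‖x‖ ^ 2)⁻¹) ^ 2 := by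
  have hlap : ∀ i j, lap (uMN m i j) x = 1 / √(m * (m - 1)) * m *
      (2 * (‖x‖ ^ 2)⁻¹ * (if i = j then 1 else 0) + -2 * m * ((‖x‖ ^ 2)⁻¹) ^ 2 * (x i * x j)) := by
    intro i j
    rw [lap_uMN, lap_lineProj hx]
    ring
  simp_rw [hlap, mul_pow _ (_ + _), ← Finset.mul_sum, sum_sq_delta_add_outer,
    ← EuclideanSpace.real_norm_sq_eq, uMN_scale_sq hm, Fintype.card_fin]
  have hm' : (2 : ℝ) ≤ m := by exact_mod_cast hm
  have : (m : ℝ) - 1 ≠ 0 := by linarith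
  field_simp
  ring

lemma gradSq_uTilde (α : ℝ) :
    gradSq (uTilde m α) x = Real.sin α ^ 2 * ∑ k, ∑ i, ∑ j, (pd k (uMN m i j) x) ^ 2 := by
  simp [gradSq, Fintype.sum_sum_type, Fintype.sum_prod_type, uTilde, pd_const_mul, pd_const,
    mul_pow, Finset.mul_sum]

lemma sum_sq_lap_uTilde (α : ℝ) :
    ∑ a, (lap (uTilde m α a) x) ^ 2 = Real.sin α ^ 2 * ∑ i, ∑ j, (lap (uMN m i j) x) ^ 2 := by
  simp [Fintype.sum_sum_type, Fintype.sum_prod_type, uTilde, lap_const_mul, lap_const,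
    mul_pow, Finset.mul_sum]

lemma bienergy_density_uTilde (hm : 2 ≤ m) (hx : x ≠ 0) (α : ℝ) :
    ∑ a, (lap (uTilde m α a) x) ^ 2 - gradSq (uTilde m α) x ^ 2
      = 4 * m ^ 2 * (Real.sin α ^ 2 * Real.cos α ^ 2) * ((‖x‖ ^ 2)⁻¹) ^ 2 := by
  rw [sum_sq_lap_uTilde, gradSq_uTilde, sum_sq_lap_uMN hm hx, sum_sq_pd_uMN hm hx, cos_sq']
  ring

end MisawaNakauchi

theorem stmt7_general (m : ℕ) (hm : 5 ≤ m) (α : ℝ)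
    (hsin : Real.sin α ^ 2 = 1 - 2 / (m : ℝ)) :
    (1 / 2) * ∫ x in unitBall m,
        ((∑ a : (Fin m × Fin m) ⊕ Unit, (lap (uTilde m α a) x) ^ 2)
          - (gradSq (uTilde m α) x) ^ 2)
      = (4 * ((m : ℝ) - 2) / ((m : ℝ) - 4)) * sphereVol m := by
  have hm' : (5 : ℝ) ≤ m := by exact_mod_cast hm
  have : Nonempty (Fin m) := ⟨⟨0, by omega⟩⟩
  have hdensity : ∀ᵐ x ∂(volume.restrict (unitBall m)),
      ∑ a, (lap (uTilde m α a) x) ^ 2 - gradSq (uTilde m α) x ^ 2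
        = 8 * (m - 2) * (‖x‖ ^ 4)⁻¹ := by
    refine ae_restrict_of_ae ?_
    filter_upwards [compl_mem_ae_iff.mpr (measure_singleton (0 : EuclideanSpace ℝ (Fin m)))]
      with x hx
    rw [bienergy_density_uTilde (by omega) hx α, cos_sq', hsin]
    field_simp
    ring
  have hdim : 4 < Module.finrank ℝ (EuclideanSpace ℝ (Fin m)) := by
    rw [finrank_euclideanSpace_fin]
    omega
  rw [integral_congr_ae hdensity, integral_const_mul, unitBall,
    integral_unitBall_inv_norm_pow volume hdim, finrank_euclideanSpace_fin, sphereVol,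
    ← measureReal_def]
  field_simp
  ring

theorem stmt7 (m : ℕ) (hm : 5 ≤ m) (α : ℝ) (hα : α ∈ Set.Ioo 0 (π / 2))
    (hsin : Real.sin α ^ 2 = 1 - 2 / (m : ℝ)) :
    (1 / 2) * ∫ x in unitBall m,
        ((∑ a : (Fin m × Fin m) ⊕ Unit, (lap (uTilde m α a) x) ^ 2)
          - (gradSq (uTilde m α) x) ^ 2)
      = (4 * ((m : ℝ) - 2) / ((m : ℝ) - 4)) * sphereVol m :=
  stmt7_general m hm α hsin
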